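/- arXiv:1803.00465 — 2 statements merged into one kernel-verified Lean document; each statement's English description precedes it below -/
import Mathlib

section
/- Splitting Rule: Let F be a field, and for disjoint finite sets let the product of basis subsets X·Y be X ∪ Y when X ∩ Y = ∅ and 0 otherwise, extended bilinearly. If v ∈ FΩ_k and w ∈ FΩ_ℓ have disjoint supports, then (v·w)φ_t^{k+ℓ} = Σ_{s=0}^{t} (v φ_s^k)·(w φ_{t−s}^ℓ), where φ_t^m sends an m-subset to the sum of its (m−t)-subsets. -/
/-- The free `F`-vector space on the `k`-element subsets of `{1,…,n}` (here `k : ℤ`,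
so that the space is zero for `k < 0`). -/
abbrev FOmega (F : Type*) [Field F] (n : ℕ) (k : ℤ) : Type _ :=
  {s : Finset (Fin n) // (s.card : ℤ) = k} →₀ F

/-- The multistep boundary map `FΩ_a → FΩ_b`, sending a subset `Y` of size `a`
to the sum of all its subsets of size `b` (this is `φ_t^a` with `t = a - b`). -/
noncomputable def phi (F : Type*) [Field F] (n : ℕ) (a b : ℤ) :
    FOmega F n a →ₗ[F] FOmega F n b :=
  Finsupp.lift _ F _ fun Y =>
    ∑ X ∈ (Y.1.powerset.filter fun X => (X.card : ℤ) = b).attach,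
      Finsupp.single ⟨X.1, (Finset.mem_filter.mp X.2).2⟩ (1 : F)

/-- The support of `v ∈ FΩ_k`: the union of the subsets appearing in `v` with a
nonzero coefficient. -/
def suppSet {F : Type*} [Field F] {n : ℕ} {a : ℤ} (v : FOmega F n a) :
    Finset (Fin n) :=
  v.support.sup (fun X => X.1)

/-- The product `FΩ_a × FΩ_b → FΩ_c`: on basis subsets, `X·Y = X ∪ Y` if `X` and `Y`
are disjoint (and this union has size `c`; automatic when `c = a + b`), and `X·Y = 0`
otherwise, extended bilinearly. -/
noncomputable def gmul {F : Type*} [Field F] {n : ℕ} {a b : ℤ} (c : ℤ)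
    (v : FOmega F n a) (w : FOmega F n b) : FOmega F n c :=
  ∑ X ∈ v.support.attach, ∑ Y ∈ w.support.attach,
    if h : Disjoint X.1.1 Y.1.1 ∧ ((X.1.1 ∪ Y.1.1).card : ℤ) = c then
      Finsupp.single ⟨X.1.1 ∪ Y.1.1, h.2⟩ (v X.1 * w Y.1)
    else 0

/-!
Both sides are bilinear in `(v, w)`, so it suffices to take for `v` and `w` single subsets `A` and
`B`, which are disjoint by the support hypothesis. Then `Z ↦ (Z ∩ A, Z ∩ B)` identifies the subsets
of `A ∪ B` of codimension `t` with the pairs of a subset of `A` of codimension `s` and a subset of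
`B` of codimension `t - s`, for `s = 0, …, t`.
-/

open Finset

section Subsets
variable {α : Type*} [DecidableEq α] {M : Type*} [AddCommMonoid M]

theorem sum_powerset_union_of_disjoint {A B : Finset α} (hd : Disjoint A B)
    (f : Finset α → M) :
    ∑ Z ∈ (A ∪ B).powerset, f Z = ∑ p ∈ A.powerset ×ˢ B.powerset, f (p.1 ∪ p.2) := by
  refine sum_nbij' (fun Z => (Z ∩ A, Z ∩ B)) (fun p => p.1 ∪ p.2) ?_ ?_ ?_ ?_ ?_
  · intro Z _
    simp only [mem_product, mem_powerset]
    exact ⟨inter_subset_right, inter_subset_right⟩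
  · intro p hp
    simp only [mem_product, mem_powerset] at hp ⊢
    exact union_subset_union hp.1 hp.2
  · intro Z hZ
    simp only [← inter_union_distrib_left, inter_eq_left.mpr (mem_powerset.mp hZ)]
  · intro p hp
    simp only [mem_product, mem_powerset] at hp
    have hpA : p.2 ∩ A = ∅ := disjoint_iff_inter_eq_empty.mp (hd.symm.mono_left hp.2)
    have hpB : p.1 ∩ B = ∅ := disjoint_iff_inter_eq_empty.mp (hd.mono_left hp.1)
    simp only [union_inter_distrib_right, inter_eq_left.mpr hp.1, inter_eq_left.mpr hp.2,
      hpA, hpB, union_empty, empty_union]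
  · intro Z hZ
    simp only [← inter_union_distrib_left, inter_eq_left.mpr (mem_powerset.mp hZ)]

theorem sum_powerset_codim_union_of_disjoint {A B : Finset α} (hd : Disjoint A B) (t : ℕ)
    (f : Finset α → M) :
    ∑ Z ∈ (A ∪ B).powerset with (#Z : ℤ) = #A + #B - t, f Z =
      ∑ s ∈ range (t + 1),
        ∑ Z₁ ∈ A.powerset with (#Z₁ : ℤ) = #A - s,
          ∑ Z₂ ∈ B.powerset with (#Z₂ : ℤ) = #B - ((t - s : ℕ) : ℤ), f (Z₁ ∪ Z₂) := by
  have hsplit : ∑ Z ∈ (A ∪ B).powerset with (#Z : ℤ) = #A + #B - t, f Z =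
      ∑ p ∈ A.powerset ×ˢ B.powerset with (#p.1 : ℤ) + #p.2 = #A + #B - t,
        f (p.1 ∪ p.2) := by
    rw [sum_filter, sum_powerset_union_of_disjoint hd, sum_filter]
    refine sum_congr rfl fun p hp => ?_
    simp only [mem_product, mem_powerset] at hp
    rw [card_union_of_disjoint (hd.mono hp.1 hp.2), Nat.cast_add]
  have hcodim : ∀ p ∈ {p ∈ A.powerset ×ˢ B.powerset | (#p.1 : ℤ) + #p.2 = #A + #B - t},
      #A - #p.1 ∈ range (t + 1) := by
    intro p hp
    simp only [mem_filter, mem_product, mem_powerset] at hp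
    have := card_le_card hp.1.1
    have := card_le_card hp.1.2
    rw [mem_range]
    omega
  rw [hsplit, ← sum_fiberwise_of_maps_to hcodim]
  refine sum_congr rfl fun s hs => ?_
  rw [← sum_product']
  refine sum_congr (Finset.ext fun p => ?_) fun _ _ => rfl
  rw [mem_range] at hs
  simp only [mem_filter, mem_product, mem_powerset]
  constructor
  · rintro ⟨⟨⟨h₁, h₂⟩, _⟩, _⟩
    have := card_le_card h₁
    have := card_le_card h₂
    exact ⟨⟨h₁, by omega⟩, h₂, by omega⟩
  · rintro ⟨⟨h₁, _⟩, h₂, _⟩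
    have := card_le_card h₁
    exact ⟨⟨⟨h₁, h₂⟩, by omega⟩, by omega⟩

end Subsets

theorem LinearMap.eq_of_eq_on_support_single_single {R α β M : Type*} [CommSemiring R]
    [AddCommMonoid M] [Module R M] (L L' : (α →₀ R) →ₗ[R] (β →₀ R) →ₗ[R] M)
    {v : α →₀ R} {w : β →₀ R}
    (h : ∀ a ∈ v.support, ∀ b ∈ w.support,
      L (Finsupp.single a 1) (Finsupp.single b 1) = L' (Finsupp.single a 1) (Finsupp.single b 1)) :
    L v w = L' v w := by
  have expand : ∀ N : (α →₀ R) →ₗ[R] (β →₀ R) →ₗ[R] M,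
      N v w = w.sum fun b (y : R) => v.sum fun a (x : R) =>
        (x * y) • N (Finsupp.single a (1 : R)) (Finsupp.single b (1 : R)) := by
    intro N
    conv_lhs => rw [← v.sum_single, ← w.sum_single]
    simp only [map_finsuppSum, LinearMap.finsupp_sum_apply]
    refine Finsupp.sum_congr fun b _ => Finsupp.sum_congr fun a _ => ?_
    rw [← Finsupp.smul_single_one a, ← Finsupp.smul_single_one b, map_smul, map_smul,
      LinearMap.smul_apply, smul_smul, mul_comm]
  rw [expand L, expand L']
  exact Finsupp.sum_congr fun b hb => Finsupp.sum_congr fun a ha => by rw [h a ha b hb]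

section Omega
variable {F : Type*} [Field F] {n : ℕ}

noncomputable def basisElem (F : Type*) [Field F] {n : ℕ} (b : ℤ) (Z : Finset (Fin n)) :
    FOmega F n b :=
  if h : (#Z : ℤ) = b then Finsupp.single ⟨Z, h⟩ 1 else 0

theorem basisElem_val {b : ℤ} (Y : {s : Finset (Fin n) // (#s : ℤ) = b}) :
    basisElem F b Y.1 = Finsupp.single Y 1 :=
  dif_pos Y.2

theorem phi_basisElem {a b : ℤ} {Y : Finset (Fin n)} (hY : (#Y : ℤ) = a) :
    phi F n a b (basisElem F a Y) = ∑ Z ∈ Y.powerset with (#Z : ℤ) = b, basisElem F b Z := by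
  rw [basisElem, dif_pos hY, phi, Finsupp.lift_apply, Finsupp.sum_single_index (by simp),
    one_smul]
  conv_rhs => rw [← sum_attach]
  refine sum_congr rfl fun Z _ => ?_
  rw [basisElem, dif_pos (mem_filter.mp Z.2).2]

noncomputable def gmulBilin (F : Type*) [Field F] {n : ℕ} (a b c : ℤ) :
    FOmega F n a →ₗ[F] FOmega F n b →ₗ[F] FOmega F n c :=
  Finsupp.lift _ F _ fun X => Finsupp.lift _ F _ fun Y =>
    if Disjoint X.1 Y.1 then basisElem F c (X.1 ∪ Y.1) else 0

theorem gmul_eq_gmulBilin {a b : ℤ} (c : ℤ) (v : FOmega F n a) (w : FOmega F n b) :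
    gmul c v w = gmulBilin F a b c v w := by
  simp only [gmul, gmulBilin, Finsupp.lift_apply, Finsupp.sum, LinearMap.sum_apply,
    LinearMap.smul_apply, smul_sum, smul_smul]
  rw [← sum_attach v.support]
  refine sum_congr rfl fun X _ => ?_
  rw [← sum_attach w.support]
  refine sum_congr rfl fun Y _ => ?_
  by_cases hXY : Disjoint X.1.1 Y.1.1
  · by_cases hc : (#(X.1.1 ∪ Y.1.1) : ℤ) = c
    · rw [dif_pos ⟨hXY, hc⟩, if_pos hXY, basisElem, dif_pos hc, Finsupp.smul_single_one]
    · rw [dif_neg (fun h => hc h.2), if_pos hXY, basisElem, dif_neg hc, smul_zero]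
  · rw [dif_neg (fun h => hXY h.1), if_neg hXY, smul_zero]

theorem gmulBilin_basisElem {a b c : ℤ} {X Y : Finset (Fin n)} (hX : (#X : ℤ) = a)
    (hY : (#Y : ℤ) = b) (hXY : Disjoint X Y) :
    gmulBilin F a b c (basisElem F a X) (basisElem F b Y) = basisElem F c (X ∪ Y) := by
  rw [basisElem, dif_pos hX, basisElem, dif_pos hY, gmulBilin, Finsupp.lift_apply,
    Finsupp.sum_single_index (by simp), one_smul, Finsupp.lift_apply,
    Finsupp.sum_single_index (by simp), one_smul, if_pos hXY]

theorem phi_gmulBilin_single_single {k l : ℤ} (t : ℕ) (X : {s : Finset (Fin n) // (#s : ℤ) = k})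
    (Y : {s : Finset (Fin n) // (#s : ℤ) = l}) (hXY : Disjoint X.1 Y.1) :
    phi F n (k + l) (k + l - t)
        (gmulBilin F k l (k + l) (Finsupp.single X 1) (Finsupp.single Y 1)) =
      ∑ s ∈ range (t + 1), gmulBilin F (k - s) (l - ((t - s : ℕ) : ℤ)) (k + l - t)
        (phi F n k (k - s) (Finsupp.single X 1))
        (phi F n l (l - ((t - s : ℕ) : ℤ)) (Finsupp.single Y 1)) := by
  obtain ⟨A, rfl⟩ := X
  obtain ⟨B, rfl⟩ := Y
  rw [← basisElem_val ⟨A, rfl⟩, ← basisElem_val ⟨B, rfl⟩, gmulBilin_basisElem rfl rfl hXY,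
    phi_basisElem (by rw [card_union_of_disjoint hXY, Nat.cast_add]),
    sum_powerset_codim_union_of_disjoint hXY]
  refine sum_congr rfl fun s _ => ?_
  simp only [phi_basisElem rfl, map_sum, LinearMap.sum_apply]
  rw [sum_comm]
  refine sum_congr rfl fun Z₂ hZ₂ => sum_congr rfl fun Z₁ hZ₁ => ?_
  simp only [mem_filter, mem_powerset] at hZ₁ hZ₂
  exact (gmulBilin_basisElem hZ₁.2 hZ₂.2 (hXY.mono hZ₁.1 hZ₂.1)).symm

end Omega

/-- Splitting Rule: if `v ∈ FΩ_k` and `w ∈ FΩ_ℓ` have disjoint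
supports, then `(v·w) φ_t^{k+ℓ} = ∑_{s=0}^{t} (v φ_s^k) · (w φ_{t-s}^ℓ)`. -/
theorem splitting_rule (F : Type*) [Field F] (n : ℕ) (k l : ℤ) (t : ℕ)
    (v : FOmega F n k) (w : FOmega F n l)
    (hdisj : Disjoint (suppSet v) (suppSet w)) :
    phi F n (k + l) (k + l - t) (gmul (k + l) v w) =
      ∑ s ∈ Finset.range (t + 1),
        gmul (k + l - t) (phi F n k (k - s) v) (phi F n l (l - ((t - s : ℕ) : ℤ)) w) := by
  have hsupp : ∀ X ∈ v.support, ∀ Y ∈ w.support, Disjoint X.1 Y.1 := fun X hX Y hY =>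
    hdisj.mono (le_sup (f := fun X => X.1) hX) (le_sup (f := fun Y => Y.1) hY)
  have hbilin := LinearMap.eq_of_eq_on_support_single_single
    ((gmulBilin F k l (k + l)).compr₂ (phi F n (k + l) (k + l - t)))
    (∑ s ∈ range (t + 1), (gmulBilin F _ _ (k + l - t)).compl₁₂
      (phi F n k (k - s)) (phi F n l (l - ((t - s : ℕ) : ℤ))))
    fun X hX Y hY => by
      simpa only [LinearMap.compr₂_apply, LinearMap.compl₁₂_apply, LinearMap.sum_apply] using
        phi_gmulBilin_single_single t X Y (hsupp X hX Y hY)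
  simpa only [gmul_eq_gmulBilin, LinearMap.compr₂_apply, LinearMap.compl₁₂_apply,
    LinearMap.sum_apply] using hbilin
end

section
/- Suspension Lemma: Let F have characteristic 2, let t ≥ 1 and 0 ≤ ℓ < t. Suppose v ∈ FΩ_k satisfies v φ_s^k = 0 for all s with ℓ < s ≤ t, and the support of v is disjoint from a set X of size ℓ + t. If C(ℓ+t, ℓ) is odd and C(ℓ + (t−s), ℓ) is even for all 0 < s ≤ ℓ, then v = (v · (X φ_ℓ^{ℓ+t})) φ_t^{k+t}. -/
open Finset

section
variable {F : Type*} [Field F] {n : ℕ}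

lemma phi_apply {a b : ℤ} (u : FOmega F n a) (B : Finset (Fin n)) (hB : (#B : ℤ) = b) :
    phi F n a b u ⟨B, hB⟩ = u.sum fun Y c => if B ⊆ Y.1 then c else 0 := by
  classical
  rw [phi, Finsupp.lift_apply, Finsupp.sum_apply]
  refine Finsupp.sum_congr fun Y _ => ?_
  simp only [Finsupp.smul_apply, Finsupp.finsetSum_apply, Finsupp.single_apply, Subtype.ext_iff]
  rw [sum_attach _ fun Z => if Z = B then (1 : F) else 0, sum_ite_eq']
  by_cases h : B ⊆ Y.1 <;> simp [h, hB]

lemma phi_single_apply {a b : ℤ} (Y : Finset (Fin n)) (hY : (#Y : ℤ) = a) (c : F)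
    (B : {s : Finset (Fin n) // (#s : ℤ) = b}) :
    phi F n a b (Finsupp.single ⟨Y, hY⟩ c) B = if B.1 ⊆ Y then c else 0 := by
  rw [phi_apply, Finsupp.sum_single_index (by simp)]

lemma phi_apply_of_card_eq {a b : ℤ} (u : FOmega F n a) (B : Finset (Fin n)) (hB : (#B : ℤ) = b)
    (hBa : (#B : ℤ) = a) : phi F n a b u ⟨B, hB⟩ = u ⟨B, hBa⟩ := by
  classical
  rw [phi_apply, Finsupp.sum_fintype _ _ fun _ => by simp]
  refine (Fintype.sum_eq_single ⟨B, hBa⟩ fun Y hY => if_neg fun hBY => hY ?_).trans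
    (if_pos le_rfl)
  exact Subtype.ext (eq_of_subset_of_card_le hBY (by have := Y.2; omega)).symm

lemma phi_eq_zero_of_lt {a b : ℤ} (hab : a < b) : phi F n a b = 0 := by
  refine LinearMap.ext fun u => Finsupp.ext fun ⟨B, hB⟩ => ?_
  rw [phi_apply, LinearMap.zero_apply, Finsupp.coe_zero, Pi.zero_apply]
  refine Finset.sum_eq_zero fun Y _ => if_neg fun hBY => ?_
  have := card_le_card hBY
  have := Y.2
  omega

lemma subset_suppSet {a : ℤ} {v : FOmega F n a} {A : {s : Finset (Fin n) // (#s : ℤ) = a}}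
    (hA : A ∈ v.support) : A.1 ⊆ suppSet v :=
  le_sup (f := Subtype.val) hA

lemma suppSet_subset_iff {a : ℤ} {v : FOmega F n a} {X : Finset (Fin n)} :
    suppSet v ⊆ X ↔ ∀ A ∈ v.support, A.1 ⊆ X :=
  Finset.sup_le_iff

lemma apply_eq_zero_of_inter_nonempty {a : ℤ} {v : FOmega F n a} {X B : Finset (Fin n)}
    (hv : Disjoint (suppSet v) X) (hB : (#B : ℤ) = a) (hBX : (B ∩ X).Nonempty) :
    v ⟨B, hB⟩ = 0 :=
  Finsupp.notMem_support_iff.mp fun hmem =>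
    not_disjoint_iff_nonempty_inter.mpr hBX (hv.mono_left (subset_suppSet hmem))

lemma suppSet_single_subset {a : ℤ} (Y : Finset (Fin n)) (hY : (#Y : ℤ) = a) (c : F) :
    suppSet (Finsupp.single ⟨Y, hY⟩ c) ⊆ Y :=
  suppSet_subset_iff.mpr fun _ hA => by
    rw [(Finsupp.mem_support_single _ _ _).mp hA |>.1]

lemma suppSet_phi_subset {a b : ℤ} (u : FOmega F n a) :
    suppSet (phi F n a b u) ⊆ suppSet u := by
  refine suppSet_subset_iff.mpr fun ⟨B, hB⟩ hmem => ?_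
  rw [Finsupp.mem_support_iff, phi_apply] at hmem
  obtain ⟨Y, hY, hBY⟩ := exists_ne_zero_of_sum_ne_zero hmem
  exact (of_not_not fun h => hBY (if_neg h) : B ⊆ Y.1).trans (subset_suppSet hY)

lemma subset_union_iff_sdiff_subset_and_inter_subset {α : Type*} [DecidableEq α]
    {A T X B : Finset α} (hA : Disjoint A X) (hT : T ⊆ X) :
    B ⊆ A ∪ T ↔ B \ X ⊆ A ∧ B ∩ X ⊆ T := by
  simp only [subset_iff, mem_union, mem_sdiff, mem_inter]
  exact ⟨fun h => ⟨fun x hx => (h hx.1).resolve_right fun hxT => hx.2 (hT hxT),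
    fun x hx => (h hx.1).resolve_left fun hxA => disjoint_left.mp hA hxA hx.2⟩,
    fun h x hx => (em (x ∈ X)).elim (fun hxX => .inr (h.2 ⟨hx, hxX⟩))
      fun hxX => .inl (h.1 ⟨hx, hxX⟩)⟩

lemma phi_gmul_apply {a b d b₁ b₂ : ℤ} (v : FOmega F n a) (w : FOmega F n b)
    {X : Finset (Fin n)} (hv : Disjoint (suppSet v) X) (hw : suppSet w ⊆ X)
    (B : Finset (Fin n)) (hB : (#B : ℤ) = d) (h₁ : (#(B \ X) : ℤ) = b₁)
    (h₂ : (#(B ∩ X) : ℤ) = b₂) :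
    phi F n (a + b) d (gmul (a + b) v w) ⟨B, hB⟩ =
      phi F n a b₁ v ⟨B \ X, h₁⟩ * phi F n b b₂ w ⟨B ∩ X, h₂⟩ := by
  classical
  rw [gmul, map_sum, Finsupp.finsetSum_apply, phi_apply v, phi_apply w, Finsupp.sum,
    Finsupp.sum, sum_mul_sum, ← sum_attach v.support]
  refine sum_congr rfl fun A _ => ?_
  have hAX : Disjoint A.1.1 X := hv.mono_left (subset_suppSet A.2)
  rw [map_sum, Finsupp.finsetSum_apply, ← sum_attach w.support]
  refine sum_congr rfl fun T _ => ?_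
  have hTX : T.1.1 ⊆ X := suppSet_subset_iff.mp hw _ T.2
  have hAT : Disjoint A.1.1 T.1.1 := hAX.mono_right hTX
  have hcard : ((#(A.1.1 ∪ T.1.1) : ℕ) : ℤ) = a + b := by
    rw [card_union_of_disjoint hAT, Nat.cast_add, A.1.2, T.1.2]
  rw [dif_pos ⟨hAT, hcard⟩, phi_single_apply, ite_zero_mul_ite_zero]
  exact if_congr (subset_union_iff_sdiff_subset_and_inter_subset hAX hTX) rfl rfl

lemma phi_phi_single_apply {a c : ℤ} {m : ℕ} (Y : Finset (Fin n)) (hY : (#Y : ℤ) = a)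
    (C : Finset (Fin n)) (hC : (#C : ℤ) = c) (hCY : C ⊆ Y) (hCm : #C ≤ m) :
    phi F n m c (phi F n a m (Finsupp.single ⟨Y, hY⟩ 1)) ⟨C, hC⟩ =
      ((#Y - #C).choose (m - #C) : F) := by
  classical
  rw [← card_filter_powersetCard_subset C Y m hCY hCm, phi_apply,
    Finsupp.sum_fintype _ _ fun _ => by simp]
  simp only [phi_single_apply, ← ite_and]
  rw [← sum_subtype (powersetCard m univ) (fun T => by rw [mem_powersetCard_univ]; omega)
    fun T => if C ⊆ T ∧ T ⊆ Y then (1 : F) else 0, sum_boole]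
  congr 2
  ext T
  simp only [mem_filter, mem_powersetCard, subset_univ, true_and]
  tauto

end

theorem suspension_lemma_general (F : Type*) [Field F] [CharP F 2] (n k l t : ℕ)
    (hlt : l < t)
    (v : FOmega F n (k : ℤ))
    (hv : ∀ s : ℕ, l < s → s ≤ t → phi F n k ((k : ℤ) - s) v = 0)
    (X : Finset (Fin n)) (hX : (X.card : ℤ) = (l : ℤ) + t)
    (hdisj : Disjoint (suppSet v) X)
    (hodd : Odd ((l + t).choose l))
    (heven : ∀ s : ℕ, 0 < s → s ≤ l → Even ((l + (t - s)).choose l)) :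
    v = phi F n ((k : ℤ) + t) k
        (gmul ((k : ℤ) + t) v
          (phi F n ((l : ℤ) + t) t (Finsupp.single ⟨X, hX⟩ 1))) := by
  classical
  have hXcard : #X = l + t := by exact_mod_cast hX
  have hw := (suppSet_phi_subset (b := t) _).trans (suppSet_single_subset X hX (1 : F))
  ext ⟨B, hB⟩
  generalize hj : #(B ∩ X) = j
  have hBX : (#(B \ X) : ℤ) = k - j := by
    have := card_sdiff_add_card_inter B X
    omega
  rw [phi_gmul_apply v _ hdisj hw B hB hBX (congrArg (Nat.cast (R := ℤ)) hj)]
  rcases Nat.eq_zero_or_pos j with rfl | hj0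
  · have hBX' : B \ X = B :=
      sdiff_eq_self_of_disjoint (disjoint_iff_inter_eq_empty.mpr (card_eq_zero.mp hj))
    have hcount : ((l + t).choose t : F) = 1 := by
      rw [CharTwo.natCast_eq_ite, ← Nat.choose_symm_add, if_neg (Nat.not_even_iff_odd.mpr hodd)]
    rw [phi_apply_of_card_eq _ _ _ (by rwa [hBX']),
      phi_phi_single_apply X hX _ _ inter_subset_right (by omega), hXcard, hj, Nat.sub_zero,
      Nat.sub_zero, hcount, mul_one]
    exact congrArg v (Subtype.ext hBX'.symm)
  rw [apply_eq_zero_of_inter_nonempty hdisj hB (card_pos.mp (by omega)), eq_comm]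
  rcases le_or_gt j l with hjl | hlj
  · refine mul_eq_zero_of_right _ ?_
    rw [phi_phi_single_apply X hX _ _ inter_subset_right (by omega), hXcard, hj,
      show l + t - j = l + (t - j) by omega, ← Nat.choose_symm_add, CharTwo.natCast_eq_ite,
      if_pos (heven j hj0 hjl)]
  rcases le_or_gt j t with hjt | htj
  · exact mul_eq_zero_of_left (by rw [hv j hlj hjt]; rfl) _
  · exact mul_eq_zero_of_right _ (by rw [phi_eq_zero_of_lt (by omega)]; rfl)

/-- Suspension Lemma: over a field of characteristic two, with
`t ≥ 1` and `0 ≤ ℓ < t`: if `v ∈ FΩ_k` satisfies `v φ_s^k = 0` for all `ℓ < s ≤ t`,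
the support of `v` is disjoint from a set `X` of size `ℓ + t`, `C(ℓ+t, ℓ)` is odd
and `C(ℓ+(t-s), ℓ)` is even for all `0 < s ≤ ℓ`, then
`v = (v · (X φ_ℓ^{ℓ+t})) φ_t^{k+t}`. -/
theorem suspension_lemma (F : Type*) [Field F] [CharP F 2] (n k l t : ℕ)
    (ht : 1 ≤ t) (hlt : l < t)
    (v : FOmega F n (k : ℤ))
    (hv : ∀ s : ℕ, l < s → s ≤ t → phi F n k ((k : ℤ) - s) v = 0)
    (X : Finset (Fin n)) (hX : (X.card : ℤ) = (l : ℤ) + t)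
    (hdisj : Disjoint (suppSet v) X)
    (hodd : Odd ((l + t).choose l))
    (heven : ∀ s : ℕ, 0 < s → s ≤ l → Even ((l + (t - s)).choose l)) :
    v = phi F n ((k : ℤ) + t) k
        (gmul ((k : ℤ) + t) v
          (phi F n ((l : ℤ) + t) t (Finsupp.single ⟨X, hX⟩ 1))) :=
  suspension_lemma_general F n k l t hlt v hv X hX hdisj hodd heven
end
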